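/- (The rational Burnside homomorphism is an isomorphism.) Let C be a finite skeletal category equipped with an epi-mono factorization system (P, Q). Then the ℚ-linear map φ : (objects of C → ℚ) → (objects of C → ℚ) defined by φ(x)(c) = Σ over objects d of x(d) · #Hom(c,d) is bijective. (Equivalently, the rational abstract Burnside ring A_ℚ(C) exists and the Burnside homomorphism A_ℚ(C) → ℚ^C is an isomorphism.) -/

import Mathlib

/-!
Composing a `P`-morphism `c ⟶ z` with a `Q`-morphism `z ⟶ d` hits every `f : c ⟶ d` exactly
`#Aut z` times if `z` is the image of `f` (unique, by skeletality) and never otherwise, so the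
matrix `#Hom(c, d)` factors as `E * N` with `E c z = #P(c, z)` and `N z d = #Q(z, d) / #Aut z`.
An epimorphic endomorphism with finite hom-set is invertible, so in a finite skeletal category
"there is an epimorphism `a ⟶ b`" is a partial order; `E` is triangular for it with nonzero
diagonal, and dually `N` for monomorphisms. Hence both are invertible, and so is `#Hom`.
-/

open CategoryTheory

theorem Matrix.mulVec_injective_of_triangular {n R : Type*} [Fintype n] [PartialOrder n]
    [Ring R] [NoZeroDivisors R] (A : Matrix n n R) (hA : ∀ i j, A i j ≠ 0 → i ≤ j)
    (hdiag : ∀ i, A i i ≠ 0) : Function.Injective A.mulVec := by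
  have : WellFoundedGT n := Finite.to_wellFoundedGT
  intro x y hxy
  rw [← sub_eq_zero, ← Matrix.mulVec_sub] at hxy
  rw [← sub_eq_zero]
  funext i
  induction i using WellFoundedGT.induction with
  | _ i ih =>
    have hrow : ∑ j, A i j * (x - y) j = A i i * (x - y) i := by
      refine Finset.sum_eq_single i (fun j _ hji => ?_) (by simp)
      by_cases hAij : A i j = 0
      · rw [hAij, zero_mul]
      · rw [ih j (lt_of_le_of_ne (hA i j hAij) (Ne.symm hji)), Pi.zero_apply, mul_zero]
    rw [← dotProduct, ← Matrix.mulVec, hxy, Pi.zero_apply, eq_comm] at hrow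
    exact (mul_eq_zero.mp hrow).resolve_left (hdiag i)

namespace CategoryTheory

variable {C : Type*} [Category C]

instance Iso.finite {a b : C} [Finite (a ⟶ b)] : Finite (a ≅ b) :=
  Finite.of_injective Iso.hom fun _ _ h => Iso.ext h

theorem isIso_of_epi_of_finite {a : C} [Finite (a ⟶ a)] (e : a ⟶ a) [Epi e] : IsIso e := by
  have hinj : Function.Injective (e ≫ · : (a ⟶ a) → (a ⟶ a)) :=
    fun _ _ => (cancel_epi e).mp
  obtain ⟨r, hr⟩ := Finite.injective_iff_surjective.mp hinj (𝟙 a)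
  have : IsSplitMono e := IsSplitMono.mk' ⟨r, hr⟩
  exact isIso_of_epi_of_isSplitMono e

theorem isIso_of_mono_of_finite {a : C} [Finite (a ⟶ a)] (m : a ⟶ a) [Mono m] : IsIso m := by
  have hinj : Function.Injective (· ≫ m : (a ⟶ a) → (a ⟶ a)) :=
    fun _ _ => (cancel_mono m).mp
  obtain ⟨s, hs⟩ := Finite.injective_iff_surjective.mp hinj (𝟙 a)
  have : IsSplitEpi m := IsSplitEpi.mk' ⟨s, hs⟩
  exact isIso_of_mono_of_isSplitEpi m

theorem isIso_of_epi_of_epi {a b : C} [Finite (a ⟶ a)] (f : a ⟶ b) (g : b ⟶ a) [Epi f]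
    [Epi g] : IsIso f := by
  have := isIso_of_epi_of_finite (f ≫ g)
  have : IsSplitMono f :=
    IsSplitMono.mk' ⟨g ≫ inv (f ≫ g), by rw [← Category.assoc, IsIso.hom_inv_id]⟩
  exact isIso_of_epi_of_isSplitMono f

theorem isIso_of_mono_of_mono {a b : C} [Finite (b ⟶ b)] (f : a ⟶ b) (g : b ⟶ a) [Mono f]
    [Mono g] : IsIso f := by
  have := isIso_of_mono_of_finite (g ≫ f)
  have : IsSplitEpi f :=
    IsSplitEpi.mk' ⟨inv (g ≫ f) ≫ g, by rw [Category.assoc, IsIso.inv_hom_id]⟩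
  exact isIso_of_mono_of_isSplitEpi f

abbrev Skeletal.epiPartialOrder (hC : Skeletal C) [∀ a : C, Finite (a ⟶ a)] :
    PartialOrder C where
  le a b := ∃ f : a ⟶ b, Epi f
  le_refl a := ⟨𝟙 a, inferInstance⟩
  le_trans _ _ _ := fun ⟨f, _⟩ ⟨g, _⟩ => ⟨f ≫ g, epi_comp f g⟩
  le_antisymm _ _ := fun ⟨f, _⟩ ⟨g, _⟩ =>
    have := isIso_of_epi_of_epi f g
    hC ⟨asIso f⟩

abbrev Skeletal.monoPartialOrder (hC : Skeletal C) [∀ a : C, Finite (a ⟶ a)] :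
    PartialOrder C where
  le a b := ∃ f : a ⟶ b, Mono f
  le_refl a := ⟨𝟙 a, inferInstance⟩
  le_trans _ _ _ := fun ⟨f, _⟩ ⟨g, _⟩ => ⟨f ≫ g, mono_comp f g⟩
  le_antisymm _ _ := fun ⟨f, _⟩ ⟨g, _⟩ =>
    have := isIso_of_mono_of_mono f g
    hC ⟨asIso f⟩

noncomputable def homCardMatrix (C : Type*) [Category C] : Matrix C C ℚ :=
  Matrix.of fun c d => Nat.card (c ⟶ d)

structure EpiMonoFactorizationSystem (C : Type*) [Category C] where
  P : MorphismProperty C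
  Q : MorphismProperty C
  epi_of_P : ∀ {a b : C} (f : a ⟶ b), P f → Epi f
  mono_of_Q : ∀ {a b : C} (f : a ⟶ b), Q f → Mono f
  P_of_isIso : ∀ {a b : C} (f : a ⟶ b), IsIso f → P f
  Q_of_isIso : ∀ {a b : C} (f : a ⟶ b), IsIso f → Q f
  P_comp : ∀ {a b c : C} (f : a ⟶ b) (g : b ⟶ c), P f → P g → P (f ≫ g)
  Q_comp : ∀ {a b c : C} (f : a ⟶ b) (g : b ⟶ c), Q f → Q g → Q (f ≫ g)
  exists_fac : ∀ {c d : C} (f : c ⟶ d),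
    ∃ (z : C) (e : c ⟶ z) (m : z ⟶ d), P e ∧ Q m ∧ e ≫ m = f
  uniq : ∀ {c d z z' : C} (e : c ⟶ z) (e' : c ⟶ z') (m : z ⟶ d) (m' : z' ⟶ d),
    P e → P e' → Q m → Q m' → e ≫ m = e' ≫ m' →
    ∃ φ : z ≅ z', e ≫ φ.hom = e' ∧ φ.hom ≫ m' = m

namespace EpiMonoFactorizationSystem

variable (F : EpiMonoFactorizationSystem C)

def FactorsThrough {c d : C} (f : c ⟶ d) (z : C) : Prop :=
  ∃ (e : c ⟶ z) (m : z ⟶ d), F.P e ∧ F.Q m ∧ e ≫ m = f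

theorem eq_of_factorsThrough (hC : Skeletal C) {c d z z' : C} {f : c ⟶ d}
    (h : F.FactorsThrough f z) (h' : F.FactorsThrough f z') : z = z' := by
  obtain ⟨e, m, he, hm, rfl⟩ := h
  obtain ⟨e', m', he', hm', hf⟩ := h'
  obtain ⟨φ, -, -⟩ := F.uniq e e' m m' he he' hm hm' hf.symm
  exact hC ⟨φ⟩

abbrev Factorization (c z d : C) : Type _ :=
  {p : (c ⟶ z) × (z ⟶ d) // F.P p.1 ∧ F.Q p.2}

theorem card_fiber_comp {c z d : C} {f : c ⟶ d} (hf : F.FactorsThrough f z) :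
    Nat.card {p : F.Factorization c z d // p.1.1 ≫ p.1.2 = f} = Nat.card (z ≅ z) := by
  obtain ⟨e₀, m₀, he₀, hm₀, rfl⟩ := hf
  have := F.epi_of_P e₀ he₀
  let act (φ : z ≅ z) : {p : F.Factorization c z d // p.1.1 ≫ p.1.2 = e₀ ≫ m₀} :=
    ⟨⟨(e₀ ≫ φ.hom, φ.inv ≫ m₀), F.P_comp _ _ he₀ (F.P_of_isIso _ inferInstance),
      F.Q_comp _ _ (F.Q_of_isIso _ inferInstance) hm₀⟩, by simp⟩
  refine (Nat.card_congr (Equiv.ofBijective act ⟨fun φ ψ h => ?_, ?_⟩)).symm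
  · exact Iso.ext ((cancel_epi e₀).mp (congrArg (fun p => p.1.1.1) h))
  · rintro ⟨⟨⟨e, m⟩, he, hm⟩, hfac⟩
    obtain ⟨φ, rfl, hφ⟩ := F.uniq e₀ e m₀ m he₀ he hm₀ hm hfac.symm
    exact ⟨φ, Subtype.ext (Subtype.ext (Prod.ext rfl (by simp [act, ← hφ])))⟩

theorem card_factorization [∀ a b : C, Finite (a ⟶ b)] (c z d : C) :
    Nat.card (F.Factorization c z d) =
      Nat.card {f : c ⟶ d // F.FactorsThrough f z} * Nat.card (z ≅ z) := by
  classical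
  have := Fintype.ofFinite (c ⟶ d)
  let comp (p : F.Factorization c z d) : {f : c ⟶ d // F.FactorsThrough f z} :=
    ⟨p.1.1 ≫ p.1.2, p.1.1, p.1.2, p.2.1, p.2.2, rfl⟩
  calc Nat.card (F.Factorization c z d) = ∑ f, Nat.card {p // comp p = f} :=
        (Nat.card_congr (Equiv.sigmaFiberEquiv comp).symm).trans Nat.card_sigma
    _ = ∑ f : {f : c ⟶ d // F.FactorsThrough f z}, Nat.card (z ≅ z) :=
        Finset.sum_congr rfl fun f _ =>
          (Nat.card_congr (Equiv.subtypeEquivRight fun _ => Subtype.ext_iff)).trans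
            (F.card_fiber_comp f.2)
    _ = _ := by simp [Nat.card_eq_fintype_card]

theorem card_P_mul_card_Q_div_card_aut [∀ a b : C, Finite (a ⟶ b)] (c z d : C) :
    (Nat.card {e : c ⟶ z // F.P e} * Nat.card {m : z ⟶ d // F.Q m} / Nat.card (z ≅ z) : ℚ) =
      Nat.card {f : c ⟶ d // F.FactorsThrough f z} := by
  have haut : (Nat.card (z ≅ z) : ℚ) ≠ 0 := by
    have : Nonempty (z ≅ z) := ⟨Iso.refl z⟩
    exact Nat.cast_ne_zero.mpr Nat.card_pos.ne'
  rw [div_eq_iff haut, ← Nat.cast_mul, ← Nat.card_prod,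
    ← Nat.card_congr Equiv.subtypeProdEquivProd]
  exact_mod_cast F.card_factorization c z d

theorem sum_card_factorsThrough (hC : Skeletal C) [Fintype C] [∀ a b : C, Finite (a ⟶ b)]
    (c d : C) : ∑ z, Nat.card {f : c ⟶ d // F.FactorsThrough f z} = Nat.card (c ⟶ d) := by
  refine Nat.card_sigma.symm.trans
    (Nat.card_congr (Equiv.ofBijective (fun p => p.2.1) ⟨?_, ?_⟩))
  · rintro ⟨z, f, hf⟩ ⟨z', f', hf'⟩ (rfl : f = f')
    obtain rfl := F.eq_of_factorsThrough hC hf hf'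
    rfl
  · intro f
    obtain ⟨z, hz⟩ := F.exists_fac f
    exact ⟨⟨z, f, hz⟩, rfl⟩

noncomputable def pMatrix : Matrix C C ℚ :=
  Matrix.of fun c z => Nat.card {e : c ⟶ z // F.P e}

noncomputable def qMatrix : Matrix C C ℚ :=
  Matrix.of fun z d => Nat.card {m : z ⟶ d // F.Q m} / Nat.card (z ≅ z)

theorem homCardMatrix_eq_pMatrix_mul_qMatrix (hC : Skeletal C) [Fintype C]
    [∀ a b : C, Finite (a ⟶ b)] : homCardMatrix C = F.pMatrix * F.qMatrix := by
  ext c d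
  simp only [homCardMatrix, pMatrix, qMatrix, Matrix.mul_apply, Matrix.of_apply, ← mul_div_assoc,
    card_P_mul_card_Q_div_card_aut]
  exact_mod_cast (F.sum_card_factorsThrough hC c d).symm

theorem pMatrix_mulVec_injective (hC : Skeletal C) [Fintype C] [∀ a : C, Finite (a ⟶ a)] :
    Function.Injective F.pMatrix.mulVec := by
  let := hC.epiPartialOrder
  refine Matrix.mulVec_injective_of_triangular _ (fun c z h => ?_) (fun c => ?_)
  · have h : Nat.card {e : c ⟶ z // F.P e} ≠ 0 := Nat.cast_ne_zero.mp h
    obtain ⟨⟨e, he⟩⟩ := (Nat.card_ne_zero.mp h).1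
    exact ⟨e, F.epi_of_P e he⟩
  · have : Nonempty {e : c ⟶ c // F.P e} := ⟨⟨𝟙 c, F.P_of_isIso _ inferInstance⟩⟩
    exact Nat.cast_ne_zero.mpr Nat.card_pos.ne'

theorem qMatrix_mulVec_injective (hC : Skeletal C) [Fintype C] [∀ a : C, Finite (a ⟶ a)] :
    Function.Injective F.qMatrix.mulVec := by
  let := hC.monoPartialOrder
  refine Matrix.mulVec_injective_of_triangular _ (fun z d h => ?_) (fun z => ?_)
  · have h : Nat.card {m : z ⟶ d // F.Q m} ≠ 0 := Nat.cast_ne_zero.mp (div_ne_zero_iff.mp h).1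
    obtain ⟨⟨m, hm⟩⟩ := (Nat.card_ne_zero.mp h).1
    exact ⟨m, F.mono_of_Q m hm⟩
  · have : Nonempty {m : z ⟶ z // F.Q m} := ⟨⟨𝟙 z, F.Q_of_isIso _ inferInstance⟩⟩
    have : Nonempty (z ≅ z) := ⟨Iso.refl z⟩
    exact div_ne_zero (Nat.cast_ne_zero.mpr Nat.card_pos.ne')
      (Nat.cast_ne_zero.mpr Nat.card_pos.ne')

end EpiMonoFactorizationSystem

theorem homCardMatrix_mulVec_bijective [Fintype C] [∀ a b : C, Finite (a ⟶ b)] (hC : Skeletal C)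
    (F : EpiMonoFactorizationSystem C) : Function.Bijective (homCardMatrix C).mulVec := by
  classical
  have hinj : Function.Injective (homCardMatrix C).mulVec := fun x y h => by
    rw [F.homCardMatrix_eq_pMatrix_mul_qMatrix hC, ← Matrix.mulVec_mulVec,
      ← Matrix.mulVec_mulVec] at h
    exact F.qMatrix_mulVec_injective hC (F.pMatrix_mulVec_injective hC h)
  exact ⟨hinj,
    Matrix.mulVec_surjective_iff_isUnit.mpr (Matrix.mulVec_injective_iff_isUnit.mp hinj)⟩

end CategoryTheory

/-- The rational Burnside homomorphism of a finite skeletal category with an epi-mono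
factorization system is bijective: the map sending `x : C → ℚ` to the function
`c ↦ ∑ d, x d * #Hom(c,d)` is a bijection. -/
theorem burnsideHom_bijective {C : Type*} [Category C] [Fintype C]
    [DecidableEq C] [∀ a b : C, Finite (a ⟶ b)] (hskel : Skeletal C)
    (P Q : MorphismProperty C)
    (hPepi : ∀ {a b : C} (f : a ⟶ b), P f → Epi f)
    (hQmono : ∀ {a b : C} (f : a ⟶ b), Q f → Mono f)
    (hPiso : ∀ {a b : C} (f : a ⟶ b), IsIso f → P f)
    (hQiso : ∀ {a b : C} (f : a ⟶ b), IsIso f → Q f)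
    (hPcomp : ∀ {a b c : C} (f : a ⟶ b) (g : b ⟶ c), P f → P g → P (f ≫ g))
    (hQcomp : ∀ {a b c : C} (f : a ⟶ b) (g : b ⟶ c), Q f → Q g → Q (f ≫ g))
    (hfact : ∀ {c d : C} (f : c ⟶ d),
      ∃ (z : C) (e : c ⟶ z) (m : z ⟶ d), P e ∧ Q m ∧ e ≫ m = f)
    (huniq : ∀ {c d z z' : C} (e : c ⟶ z) (e' : c ⟶ z') (m : z ⟶ d) (m' : z' ⟶ d),
      P e → P e' → Q m → Q m' → e ≫ m = e' ≫ m' →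
      ∃ φ : z ≅ z', e ≫ φ.hom = e' ∧ φ.hom ≫ m' = m) :
    Function.Bijective
      (fun (x : C → ℚ) (c : C) => ∑ d : C, x d * (Nat.card (c ⟶ d) : ℚ)) := by
  change Function.Bijective fun x => Matrix.vecMul x (homCardMatrix C).transpose
  simp only [Matrix.vecMul_transpose]
  exact homCardMatrix_mulVec_bijective hskel
    ⟨P, Q, hPepi, hQmono, hPiso, hQiso, hPcomp, hQcomp, hfact, huniq⟩
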